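/- arXiv:1312.5266 — 7 statements merged into one kernel-verified Lean document; each statement's English description precedes it below -/
import Mathlib

section
/- Let n ≥ 1, let Ω ⊆ ℝⁿ be open, and let u₀ ∈ Ω. Suppose v : Ω → Matrix (Fin n) (Fin n) ℝ, λ : Ω → ℝ and h : Ω → ℝ are such that λ and h are differentiable at u₀, that ξ ∈ ℝⁿ satisfies v(u₀) ξ = λ(u₀) ξ, that h(u₀) ≠ 0, and that the covector identity Dh(u₀)(v(u₀) w) = h(u₀) · Dλ(u₀)(w) + λ(u₀) · Dh(u₀)(w) holds for every w ∈ ℝⁿ (where Dh(u₀), Dλ(u₀) denote the Fréchet derivatives at u₀). Then Dλ(u₀)(ξ) = 0, i.e. the characteristic speed λ is linearly degenerate in the direction of the eigenvector ξ at u₀. -/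
theorem eq_zero_of_covector_identity_at_eigenvector {R M F : Type*} [Ring R] [NoZeroDivisors R]
    [AddCommGroup M] [Module R M] [FunLike F M R] [LinearMapClass F R M R]
    {f g : F} {A : M → M} {ξ : M} {c μ : R} (hA : A ξ = μ • ξ)
    (hfg : f (A ξ) = c * g ξ + μ * f ξ) (hc : c ≠ 0) :
    g ξ = 0 := by
  rw [hA, map_smul, smul_eq_mul, right_eq_add] at hfg
  exact (mul_eq_zero.mp hfg).resolve_left hc

theorem characteristic_integral_implies_linear_degeneracy_2d_general
    (n : ℕ) (u₀ : Fin n → ℝ)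
    (v : (Fin n → ℝ) → Matrix (Fin n) (Fin n) ℝ)
    (lam h : (Fin n → ℝ) → ℝ)
    (ξ : Fin n → ℝ) (hξ : (v u₀).mulVec ξ = lam u₀ • ξ)
    (hh0 : h u₀ ≠ 0)
    (hcov : ∀ w : Fin n → ℝ,
      fderiv ℝ h u₀ ((v u₀).mulVec w)
        = h u₀ * fderiv ℝ lam u₀ w + lam u₀ * fderiv ℝ h u₀ w) :
    fderiv ℝ lam u₀ ξ = 0 :=
  eq_zero_of_covector_identity_at_eigenvector hξ (hcov ξ) hh0

/-- For a hydrodynamic type system `u_t = v(u) u_x`, the existence of a characteristic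
integral `h(u)(dx + λ dt)` (encoded by the covector identity
`Dh(u₀)(v(u₀) w) = h(u₀) Dλ(u₀)(w) + λ(u₀) Dh(u₀)(w)`) in a characteristic direction
implies that the corresponding characteristic speed `λ` is linearly degenerate:
`Dλ(u₀)(ξ) = 0` for the eigenvector `ξ` of `v(u₀)` with eigenvalue `λ(u₀)`. -/
theorem characteristic_integral_implies_linear_degeneracy_2d
    (n : ℕ) (hn : 1 ≤ n) (Ω : Set (Fin n → ℝ)) (hΩ : IsOpen Ω)
    (u₀ : Fin n → ℝ) (hu₀ : u₀ ∈ Ω)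
    (v : (Fin n → ℝ) → Matrix (Fin n) (Fin n) ℝ)
    (lam h : (Fin n → ℝ) → ℝ)
    (hlam : DifferentiableAt ℝ lam u₀) (hh : DifferentiableAt ℝ h u₀)
    (ξ : Fin n → ℝ) (hξ : (v u₀).mulVec ξ = lam u₀ • ξ)
    (hh0 : h u₀ ≠ 0)
    (hcov : ∀ w : Fin n → ℝ,
      fderiv ℝ h u₀ ((v u₀).mulVec w)
        = h u₀ * fderiv ℝ lam u₀ w + lam u₀ * fderiv ℝ h u₀ w) :
    fderiv ℝ lam u₀ ξ = 0 :=
  characteristic_integral_implies_linear_degeneracy_2d_general n u₀ v lam h ξ hξ hh0 hcov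
end

section
/- Let Ω ⊆ ℝ³ be open and let f : Ω → Matrix (Fin 3) (Fin 3) ℝ be continuously differentiable with f(p) symmetric and invertible for every p ∈ Ω. Let F : Ω → ℝ³ be continuously differentiable and s : Ω → ℝ be such that for all p ∈ Ω and all indices i, j: (∂F_i/∂p_j)(p) + (∂F_j/∂p_i)(p) = 2 s(p) f(p)_{ij}, and suppose the characteristic condition ∑_{i,j} (f(p)⁻¹)_{ij} F_i(p) F_j(p) = 0 holds for all p ∈ Ω. Define G(p) := f(p)⁻¹ F(p) ∈ ℝ³. Then for every p ∈ Ω one has ∑_{i,j,k} (∂f_{ij}/∂p_k)(p) · G_i(p) G_j(p) G_k(p) = 0. -/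
/-!
Put `G = f⁻¹ F`. Then `F = f G` and the characteristic condition says `F ⬝ᵥ G = 0`, hence also
`f G ⬝ᵥ G = 0`, on all of `Ω`. Differentiating both identities along `G` and using the symmetry
of `f` gives `(∂_G f) G ⬝ᵥ G = -2 F ⬝ᵥ ∂_G G = 2 ∂_G F ⬝ᵥ G = G ⬝ᵥ (J + Jᵀ) G`, where `J` is the
Jacobian of `F`; since `J + Jᵀ = 2 s f`, this is `2 s (f G ⬝ᵥ G) = 0`. No formula for the
derivative of `f⁻¹` is needed, only its differentiability, which Cramer's rule provides.
-/

open Matrix Filter Topology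

section Calculus

variable {𝕜 E ι κ : Type*} [NontriviallyNormedField 𝕜] [NormedAddCommGroup E] [NormedSpace 𝕜 E]
  [Fintype ι] {p : E}

theorem differentiableAt_det [DecidableEq ι] {A : E → Matrix ι ι 𝕜}
    (hA : ∀ i j, DifferentiableAt 𝕜 (fun q => A q i j) p) :
    DifferentiableAt 𝕜 (fun q => (A q).det) p := by
  simp only [det_apply]
  fun_prop

theorem differentiableAt_adjugate_apply [DecidableEq ι] {A : E → Matrix ι ι 𝕜}
    (hA : ∀ i j, DifferentiableAt 𝕜 (fun q => A q i j) p) (i j : ι) :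
    DifferentiableAt 𝕜 (fun q => (A q).adjugate i j) p := by
  simp only [adjugate_apply]
  refine differentiableAt_det fun k l => ?_
  simp only [updateRow_apply]
  split_ifs
  · fun_prop
  · exact hA k l

theorem differentiableAt_inv_apply [DecidableEq ι] {A : E → Matrix ι ι 𝕜}
    (hA : ∀ i j, DifferentiableAt 𝕜 (fun q => A q i j) p) (hdet : IsUnit (A p).det) (i j : ι) :
    DifferentiableAt 𝕜 (fun q => (A q)⁻¹ i j) p := by
  simp only [inv_def, Ring.inverse_eq_inv', Matrix.smul_apply, smul_eq_mul]
  exact ((differentiableAt_det hA).inv hdet.ne_zero).mul (differentiableAt_adjugate_apply hA i j)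

theorem differentiableAt_mulVec_apply {A : E → Matrix κ ι 𝕜} {v : E → ι → 𝕜}
    (hA : ∀ i j, DifferentiableAt 𝕜 (fun q => A q i j) p)
    (hv : ∀ j, DifferentiableAt 𝕜 (fun q => v q j) p) (i : κ) :
    DifferentiableAt 𝕜 (fun q => (A q *ᵥ v q) i) p := by
  simp only [mulVec, dotProduct]
  fun_prop

theorem fderiv_dotProduct_apply {u v : E → ι → 𝕜}
    (hu : ∀ i, DifferentiableAt 𝕜 (fun q => u q i) p)
    (hv : ∀ i, DifferentiableAt 𝕜 (fun q => v q i) p) (w : E) :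
    fderiv 𝕜 (fun q => u q ⬝ᵥ v q) p w =
      (fun i => fderiv 𝕜 (fun q => u q i) p w) ⬝ᵥ v p
        + u p ⬝ᵥ fun i => fderiv 𝕜 (fun q => v q i) p w := by
  simp only [dotProduct]
  rw [fderiv_fun_sum fun i _ => (hu i).fun_mul (hv i)]
  simp [fderiv_fun_mul (hu _) (hv _), Finset.sum_add_distrib, mul_comm, add_comm]

theorem fderiv_dotProduct_apply_eq_zero_of_eventually {u v : E → ι → 𝕜}
    (hu : ∀ i, DifferentiableAt 𝕜 (fun q => u q i) p)
    (hv : ∀ i, DifferentiableAt 𝕜 (fun q => v q i) p) (h : ∀ᶠ q in 𝓝 p, u q ⬝ᵥ v q = 0)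
    (w : E) :
    (fun i => fderiv 𝕜 (fun q => u q i) p w) ⬝ᵥ v p
      + u p ⬝ᵥ (fun i => fderiv 𝕜 (fun q => v q i) p w) = 0 := by
  rw [← fderiv_dotProduct_apply hu hv, EventuallyEq.fderiv_eq (f := fun _ => 0) h,
    fderiv_const_apply]
  rfl

theorem fderiv_mulVec_apply {A : E → Matrix κ ι 𝕜} {v : E → ι → 𝕜}
    (hA : ∀ i j, DifferentiableAt 𝕜 (fun q => A q i j) p)
    (hv : ∀ j, DifferentiableAt 𝕜 (fun q => v q j) p) (w : E) (i : κ) :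
    fderiv 𝕜 (fun q => (A q *ᵥ v q) i) p w =
      ((of fun i j => fderiv 𝕜 (fun q => A q i j) p w) *ᵥ v p
        + A p *ᵥ fun j => fderiv 𝕜 (fun q => v q j) p w) i :=
  fderiv_dotProduct_apply (hA i) hv w

variable [DecidableEq ι]

theorem ContinuousLinearMap.sum_apply_single_mul (L : (ι → 𝕜) →L[𝕜] 𝕜) (x : ι → 𝕜) :
    ∑ k, L (Pi.single k 1) * x k = L x := by
  conv_rhs => rw [← Finset.univ_sum_single x]
  refine (Finset.sum_congr rfl fun k _ => ?_).trans (map_sum L _ _).symm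
  rw [mul_comm, ← smul_eq_mul, ← map_smul, ← Pi.single_smul, smul_eq_mul, mul_one]

theorem sum_apply_single_cubic_eq_mulVec_dotProduct (L : ι → ι → (ι → 𝕜) →L[𝕜] 𝕜)
    (x : ι → 𝕜) :
    ∑ i, ∑ j, ∑ k, L i j (Pi.single k 1) * x i * x j * x k
      = (of fun i j => L i j x) *ᵥ x ⬝ᵥ x := by
  simp only [← ContinuousLinearMap.sum_apply_single_mul (L _ _) x, dotProduct, mulVec, of_apply,
    Finset.sum_mul]
  exact Finset.sum_congr rfl fun i _ => Finset.sum_congr rfl fun j _ =>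
    Finset.sum_congr rfl fun k _ => by ring

end Calculus

section Algebra

variable {R ι : Type*} [CommRing R] [Fintype ι]

theorem dotProduct_mulVec_self_eq_sum (B : Matrix ι ι R) (v : ι → R) :
    v ⬝ᵥ B *ᵥ v = ∑ i, ∑ j, B i j * v i * v j := by
  simp only [dotProduct, mulVec, Finset.mul_sum]
  exact Finset.sum_congr rfl fun i _ => Finset.sum_congr rfl fun j _ => by ring

theorem dotProduct_add_transpose_mulVec_self (J : Matrix ι ι R) (x : ι → R) :
    x ⬝ᵥ (J + Jᵀ) *ᵥ x = 2 * (x ⬝ᵥ J *ᵥ x) := by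
  rw [add_mulVec, dotProduct_add, mulVec_transpose, dotProduct_comm x (x ᵥ* J),
    ← dotProduct_mulVec, two_mul]

theorem mulVec_dotProduct_self_eq_zero_of_characteristic {A dA J : Matrix ι ι R}
    {x dx : ι → R} {s : R} (hA : A.IsSymm) (hJ : J + Jᵀ = (2 * s) • A)
    (hx : A *ᵥ x ⬝ᵥ x = 0) (hderiv₁ : J *ᵥ x ⬝ᵥ x + A *ᵥ x ⬝ᵥ dx = 0)
    (hderiv₂ : (dA *ᵥ x + A *ᵥ dx) ⬝ᵥ x + A *ᵥ x ⬝ᵥ dx = 0) :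
    dA *ᵥ x ⬝ᵥ x = 0 := by
  have hA_dx : A *ᵥ dx ⬝ᵥ x = A *ᵥ x ⬝ᵥ dx := by
    rw [dotProduct_comm, dotProduct_mulVec, ← mulVec_transpose, hA.eq]
  calc dA *ᵥ x ⬝ᵥ x = 2 * (J *ᵥ x ⬝ᵥ x) := by
        rw [add_dotProduct, hA_dx] at hderiv₂
        linear_combination hderiv₂ - 2 * hderiv₁
    _ = x ⬝ᵥ (J + Jᵀ) *ᵥ x := by rw [dotProduct_add_transpose_mulVec_self, dotProduct_comm]
    _ = 0 := by rw [hJ, smul_mulVec, dotProduct_smul, dotProduct_comm, hx, smul_zero]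

end Algebra

/-- If the fluxes `F` of a conservation law of a 3D quasilinear second-order PDE with
symmetric invertible symbol `f(p)` satisfy `F_{(i,j)} = s f_{ij}` and the characteristic
condition `∑ (f⁻¹)_{ij} F_i F_j = 0`, then the cubic condition
`∑ f_{ij,k} G_i G_j G_k = 0` holds for `G = f⁻¹ F`. -/
theorem characteristic_implies_cubic_condition
    (Ω : Set (Fin 3 → ℝ)) (hΩ : IsOpen Ω)
    (f : (Fin 3 → ℝ) → Matrix (Fin 3) (Fin 3) ℝ)
    (hf : ∀ i j : Fin 3, ContDiffOn ℝ 1 (fun q => f q i j) Ω)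
    (hsymm : ∀ p ∈ Ω, (f p).IsSymm)
    (hinv : ∀ p ∈ Ω, IsUnit (f p).det)
    (F : (Fin 3 → ℝ) → (Fin 3 → ℝ))
    (hF : ∀ i : Fin 3, ContDiffOn ℝ 1 (fun q => F q i) Ω)
    (s : (Fin 3 → ℝ) → ℝ)
    (hFs : ∀ p ∈ Ω, ∀ i j : Fin 3,
      fderiv ℝ (fun q => F q i) p (Pi.single j 1)
        + fderiv ℝ (fun q => F q j) p (Pi.single i 1) = 2 * s p * f p i j)
    (hchar : ∀ p ∈ Ω, ∑ i : Fin 3, ∑ j : Fin 3, (f p)⁻¹ i j * F p i * F p j = 0) :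
    ∀ p ∈ Ω, ∑ i : Fin 3, ∑ j : Fin 3, ∑ k : Fin 3,
      fderiv ℝ (fun q => f q i j) p (Pi.single k 1)
        * ((f p)⁻¹ *ᵥ F p) i * ((f p)⁻¹ *ᵥ F p) j * ((f p)⁻¹ *ᵥ F p) k = 0 := by
  intro p hp
  set G : (Fin 3 → ℝ) → Fin 3 → ℝ := fun q => (f q)⁻¹ *ᵥ F q with hG
  have hΩp : Ω ∈ 𝓝 p := hΩ.mem_nhds hp
  have hfd i j : DifferentiableAt ℝ (fun q => f q i j) p :=
    ((hf i j).contDiffAt hΩp).differentiableAt_one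
  have hFd i : DifferentiableAt ℝ (fun q => F q i) p := ((hF i).contDiffAt hΩp).differentiableAt_one
  have hGd : ∀ i, DifferentiableAt ℝ (fun q => G q i) p :=
    differentiableAt_mulVec_apply (differentiableAt_inv_apply hfd (hinv p hp)) hFd
  have hfG : ∀ q ∈ Ω, f q *ᵥ G q = F q := fun q hq => by
    rw [hG, mulVec_mulVec, mul_nonsing_inv _ (hinv q hq), one_mulVec]
  have hFG : ∀ q ∈ Ω, F q ⬝ᵥ G q = 0 := fun q hq => by
    rw [hG, dotProduct_mulVec_self_eq_sum, hchar q hq]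
  have hfGG : ∀ q ∈ Ω, f q *ᵥ G q ⬝ᵥ G q = 0 := fun q hq => by rw [hfG q hq, hFG q hq]
  set x := G p
  set J : Matrix (Fin 3) (Fin 3) ℝ := of fun i j => fderiv ℝ (fun q => F q i) p (Pi.single j 1)
  have hJ : J + Jᵀ = (2 * s p) • f p := by
    ext i j
    simp [J, hFs p hp i j]
  have hFG_deriv := fderiv_dotProduct_apply_eq_zero_of_eventually hFd hGd (eventually_of_mem hΩp hFG) x
  have hfGG_deriv := fderiv_dotProduct_apply_eq_zero_of_eventually (differentiableAt_mulVec_apply hfd hGd)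
    hGd (eventually_of_mem hΩp hfGG) x
  have hdF : (fun i => fderiv ℝ (fun q => F q i) p x) = J *ᵥ x :=
    funext fun i => (ContinuousLinearMap.sum_apply_single_mul _ x).symm
  rw [hdF, ← hfG p hp] at hFG_deriv
  simp only [fderiv_mulVec_apply hfd hGd] at hfGG_deriv
  rw [sum_apply_single_cubic_eq_mulVec_dotProduct]
  exact mulVec_dotProduct_self_eq_zero_of_characteristic (hsymm p hp) hJ (hfGG p hp)
    hFG_deriv hfGG_deriv
end

section
/- Let μ, ν, η be real numbers with μ + ν + η = 0, and let u : ℝ³ → ℝ be twice continuously differentiable in (x,y,t) satisfying μ u_t u_{xy} + ν u_y u_{xt} + η u_x u_{yt} = 0 at every point, with u_x, u_y, u_t nowhere vanishing. Then the following four conservation laws hold at every point: (1) η ∂_x(u_y u_t) + ν ∂_y(u_x u_t) + μ ∂_t(u_x u_y) = 0; (2) ν ∂_x(u_y/u_t) + η ∂_y(u_x/u_t) = 0; (3) μ ∂_x(u_t/u_y) + η ∂_t(u_x/u_y) = 0; (4) μ ∂_y(u_t/u_x) + ν ∂_t(u_y/u_x) = 0. -/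
/-!
Differentiate each density by the product or quotient rule and identify the mixed partials
(symmetry of the second derivative of a `C²` function). Using `μ + ν + η = 0`, the four
divergences become `-1`, `-1 / u_t²`, `-1 / u_y²` and `-1 / u_x²` times the left-hand side
of the equation.
-/

/-- Partial derivative with respect to the first variable `x`. -/
noncomputable def pdx (f : ℝ × ℝ × ℝ → ℝ) (p : ℝ × ℝ × ℝ) : ℝ :=
  deriv (fun s => f (s, p.2.1, p.2.2)) p.1

/-- Partial derivative with respect to the second variable `y`. -/
noncomputable def pdy (f : ℝ × ℝ × ℝ → ℝ) (p : ℝ × ℝ × ℝ) : ℝ :=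
  deriv (fun s => f (p.1, s, p.2.2)) p.2.1

/-- Partial derivative with respect to the third variable `t`. -/
noncomputable def pdt (f : ℝ × ℝ × ℝ → ℝ) (p : ℝ × ℝ × ℝ) : ℝ :=
  deriv (fun s => f (p.1, p.2.1, s)) p.2.2

theorem hasDerivAt_line_x (y t x : ℝ) : HasDerivAt (fun s : ℝ => (s, y, t)) (1, 0, 0) x :=
  (hasDerivAt_id x).prodMk (hasDerivAt_const x (y, t))

theorem hasDerivAt_line_y (x t y : ℝ) : HasDerivAt (fun s : ℝ => (x, s, t)) (0, 1, 0) y :=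
  (hasDerivAt_const y x).prodMk ((hasDerivAt_id y).prodMk (hasDerivAt_const y t))

theorem hasDerivAt_line_t (x y t : ℝ) : HasDerivAt (fun s : ℝ => (x, y, s)) (0, 0, 1) t :=
  (hasDerivAt_const t x).prodMk ((hasDerivAt_const t y).prodMk (hasDerivAt_id t))

section FirstOrder

variable {f g : ℝ × ℝ × ℝ → ℝ} {p : ℝ × ℝ × ℝ}

theorem pdx_eq_fderiv (hf : DifferentiableAt ℝ f p) : pdx f p = fderiv ℝ f p (1, 0, 0) :=
  (hf.hasFDerivAt.comp_hasDerivAt p.1 (hasDerivAt_line_x _ _ _)).deriv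

theorem pdy_eq_fderiv (hf : DifferentiableAt ℝ f p) : pdy f p = fderiv ℝ f p (0, 1, 0) :=
  (hf.hasFDerivAt.comp_hasDerivAt p.2.1 (hasDerivAt_line_y _ _ _)).deriv

theorem pdt_eq_fderiv (hf : DifferentiableAt ℝ f p) : pdt f p = fderiv ℝ f p (0, 0, 1) :=
  (hf.hasFDerivAt.comp_hasDerivAt p.2.2 (hasDerivAt_line_t _ _ _)).deriv

theorem DifferentiableAt.comp_line_x (hf : DifferentiableAt ℝ f p) :
    DifferentiableAt ℝ (fun s => f (s, p.2.1, p.2.2)) p.1 :=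
  hf.comp p.1 (hasDerivAt_line_x _ _ _).differentiableAt

theorem DifferentiableAt.comp_line_y (hf : DifferentiableAt ℝ f p) :
    DifferentiableAt ℝ (fun s => f (p.1, s, p.2.2)) p.2.1 :=
  hf.comp p.2.1 (hasDerivAt_line_y _ _ _).differentiableAt

theorem DifferentiableAt.comp_line_t (hf : DifferentiableAt ℝ f p) :
    DifferentiableAt ℝ (fun s => f (p.1, p.2.1, s)) p.2.2 :=
  hf.comp p.2.2 (hasDerivAt_line_t _ _ _).differentiableAt

theorem pdx_mul (hf : DifferentiableAt ℝ f p) (hg : DifferentiableAt ℝ g p) :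
    pdx (fun q => f q * g q) p = pdx f p * g p + f p * pdx g p :=
  deriv_mul hf.comp_line_x hg.comp_line_x

theorem pdy_mul (hf : DifferentiableAt ℝ f p) (hg : DifferentiableAt ℝ g p) :
    pdy (fun q => f q * g q) p = pdy f p * g p + f p * pdy g p :=
  deriv_mul hf.comp_line_y hg.comp_line_y

theorem pdt_mul (hf : DifferentiableAt ℝ f p) (hg : DifferentiableAt ℝ g p) :
    pdt (fun q => f q * g q) p = pdt f p * g p + f p * pdt g p :=
  deriv_mul hf.comp_line_t hg.comp_line_t

theorem pdx_div (hf : DifferentiableAt ℝ f p) (hg : DifferentiableAt ℝ g p) (hp : g p ≠ 0) :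
    pdx (fun q => f q / g q) p = (pdx f p * g p - f p * pdx g p) / g p ^ 2 :=
  deriv_div hf.comp_line_x hg.comp_line_x hp

theorem pdy_div (hf : DifferentiableAt ℝ f p) (hg : DifferentiableAt ℝ g p) (hp : g p ≠ 0) :
    pdy (fun q => f q / g q) p = (pdy f p * g p - f p * pdy g p) / g p ^ 2 :=
  deriv_div hf.comp_line_y hg.comp_line_y hp

theorem pdt_div (hf : DifferentiableAt ℝ f p) (hg : DifferentiableAt ℝ g p) (hp : g p ≠ 0) :
    pdt (fun q => f q / g q) p = (pdt f p * g p - f p * pdt g p) / g p ^ 2 :=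
  deriv_div hf.comp_line_t hg.comp_line_t hp

end FirstOrder

theorem fderiv_fderiv_apply_comm {E F : Type*} [NormedAddCommGroup E] [NormedSpace ℝ E]
    [NormedAddCommGroup F] [NormedSpace ℝ F] {u : E → F} (hu : ContDiff ℝ 2 u) (p v w : E) :
    fderiv ℝ (fun q => fderiv ℝ u q v) p w = fderiv ℝ (fun q => fderiv ℝ u q w) p v := by
  have hd : Differentiable ℝ (fderiv ℝ u) :=
    (hu.fderiv_right (m := 1) le_rfl).differentiable one_ne_zero
  simp only [fderiv_clm_apply (hd p) (differentiableAt_const _), fderiv_const_apply,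
    ContinuousLinearMap.comp_zero, zero_add, ContinuousLinearMap.flip_apply]
  exact (hu.contDiffAt.isSymmSndFDerivAt (by simp)).eq w v

section SecondOrder

variable {u : ℝ × ℝ × ℝ → ℝ}

theorem pdx_eq_fderiv_apply (hu : Differentiable ℝ u) :
    pdx u = fun q => fderiv ℝ u q (1, 0, 0) :=
  funext fun q => pdx_eq_fderiv (hu q)

theorem pdy_eq_fderiv_apply (hu : Differentiable ℝ u) :
    pdy u = fun q => fderiv ℝ u q (0, 1, 0) :=
  funext fun q => pdy_eq_fderiv (hu q)

theorem pdt_eq_fderiv_apply (hu : Differentiable ℝ u) :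
    pdt u = fun q => fderiv ℝ u q (0, 0, 1) :=
  funext fun q => pdt_eq_fderiv (hu q)

variable {m n : WithTop ℕ∞}

theorem contDiff_pdx (hu : ContDiff ℝ n u) (hmn : m + 1 ≤ n) : ContDiff ℝ m (pdx u) := by
  rw [pdx_eq_fderiv_apply (hu.differentiable fun h => by simp [h] at hmn)]
  exact (hu.fderiv_right hmn).clm_apply contDiff_const

theorem contDiff_pdy (hu : ContDiff ℝ n u) (hmn : m + 1 ≤ n) : ContDiff ℝ m (pdy u) := by
  rw [pdy_eq_fderiv_apply (hu.differentiable fun h => by simp [h] at hmn)]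
  exact (hu.fderiv_right hmn).clm_apply contDiff_const

theorem contDiff_pdt (hu : ContDiff ℝ n u) (hmn : m + 1 ≤ n) : ContDiff ℝ m (pdt u) := by
  rw [pdt_eq_fderiv_apply (hu.differentiable fun h => by simp [h] at hmn)]
  exact (hu.fderiv_right hmn).clm_apply contDiff_const

theorem differentiable_pdx (hu : ContDiff ℝ 2 u) : Differentiable ℝ (pdx u) :=
  (contDiff_pdx hu (m := 1) (by norm_num)).differentiable one_ne_zero

theorem differentiable_pdy (hu : ContDiff ℝ 2 u) : Differentiable ℝ (pdy u) :=
  (contDiff_pdy hu (m := 1) (by norm_num)).differentiable one_ne_zero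

theorem differentiable_pdt (hu : ContDiff ℝ 2 u) : Differentiable ℝ (pdt u) :=
  (contDiff_pdt hu (m := 1) (by norm_num)).differentiable one_ne_zero

theorem pdy_pdx_eq_pdx_pdy (hu : ContDiff ℝ 2 u) (p : ℝ × ℝ × ℝ) :
    pdy (pdx u) p = pdx (pdy u) p := by
  have hd := hu.differentiable two_ne_zero
  rw [pdy_eq_fderiv (differentiable_pdx hu p), pdx_eq_fderiv (differentiable_pdy hu p),
    pdx_eq_fderiv_apply hd, pdy_eq_fderiv_apply hd, fderiv_fderiv_apply_comm hu]

theorem pdt_pdx_eq_pdx_pdt (hu : ContDiff ℝ 2 u) (p : ℝ × ℝ × ℝ) :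
    pdt (pdx u) p = pdx (pdt u) p := by
  have hd := hu.differentiable two_ne_zero
  rw [pdt_eq_fderiv (differentiable_pdx hu p), pdx_eq_fderiv (differentiable_pdt hu p),
    pdx_eq_fderiv_apply hd, pdt_eq_fderiv_apply hd, fderiv_fderiv_apply_comm hu]

theorem pdt_pdy_eq_pdy_pdt (hu : ContDiff ℝ 2 u) (p : ℝ × ℝ × ℝ) :
    pdt (pdy u) p = pdy (pdt u) p := by
  have hd := hu.differentiable two_ne_zero
  rw [pdt_eq_fderiv (differentiable_pdy hu p), pdy_eq_fderiv (differentiable_pdt hu p),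
    pdy_eq_fderiv_apply hd, pdt_eq_fderiv_apply hd, fderiv_fderiv_apply_comm hu]

end SecondOrder

noncomputable def veroneseWebLHS (μ ν η : ℝ) (u : ℝ × ℝ × ℝ → ℝ) (p : ℝ × ℝ × ℝ) : ℝ :=
  μ * pdt u p * pdy (pdx u) p + ν * pdy u p * pdt (pdx u) p + η * pdx u p * pdt (pdy u) p

section ConservationLaws

variable {μ ν η : ℝ} {u : ℝ × ℝ × ℝ → ℝ} {p : ℝ × ℝ × ℝ}

theorem veronese_conservation_mul (hμνη : μ + ν + η = 0) (hu : ContDiff ℝ 2 u)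
    (heq : veroneseWebLHS μ ν η u p = 0) :
    η * pdx (fun q => pdy u q * pdt u q) p + ν * pdy (fun q => pdx u q * pdt u q) p
      + μ * pdt (fun q => pdx u q * pdy u q) p = 0 := by
  rw [pdx_mul (differentiable_pdy hu p) (differentiable_pdt hu p),
    pdy_mul (differentiable_pdx hu p) (differentiable_pdt hu p),
    pdt_mul (differentiable_pdx hu p) (differentiable_pdy hu p),
    ← pdy_pdx_eq_pdx_pdy hu, ← pdt_pdx_eq_pdx_pdt hu, ← pdt_pdy_eq_pdy_pdt hu]
  unfold veroneseWebLHS at heq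
  obtain rfl : η = -μ - ν := by linarith
  linear_combination -heq

theorem veronese_conservation_div_pdt (hμνη : μ + ν + η = 0) (hu : ContDiff ℝ 2 u)
    (ht : pdt u p ≠ 0) (heq : veroneseWebLHS μ ν η u p = 0) :
    ν * pdx (fun q => pdy u q / pdt u q) p + η * pdy (fun q => pdx u q / pdt u q) p = 0 := by
  rw [pdx_div (differentiable_pdy hu p) (differentiable_pdt hu p) ht,
    pdy_div (differentiable_pdx hu p) (differentiable_pdt hu p) ht,
    ← pdy_pdx_eq_pdx_pdy hu, ← pdt_pdx_eq_pdx_pdt hu, ← pdt_pdy_eq_pdy_pdt hu]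
  unfold veroneseWebLHS at heq
  obtain rfl : η = -μ - ν := by linarith
  field_simp
  linear_combination -heq

theorem veronese_conservation_div_pdy (hμνη : μ + ν + η = 0) (hu : ContDiff ℝ 2 u)
    (hy : pdy u p ≠ 0) (heq : veroneseWebLHS μ ν η u p = 0) :
    μ * pdx (fun q => pdt u q / pdy u q) p + η * pdt (fun q => pdx u q / pdy u q) p = 0 := by
  rw [pdx_div (differentiable_pdt hu p) (differentiable_pdy hu p) hy,
    pdt_div (differentiable_pdx hu p) (differentiable_pdy hu p) hy,
    ← pdy_pdx_eq_pdx_pdy hu, ← pdt_pdx_eq_pdx_pdt hu]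
  unfold veroneseWebLHS at heq
  obtain rfl : η = -μ - ν := by linarith
  field_simp
  linear_combination -heq

theorem veronese_conservation_div_pdx (hμνη : μ + ν + η = 0) (hu : ContDiff ℝ 2 u)
    (hx : pdx u p ≠ 0) (heq : veroneseWebLHS μ ν η u p = 0) :
    μ * pdy (fun q => pdt u q / pdx u q) p + ν * pdt (fun q => pdy u q / pdx u q) p = 0 := by
  rw [pdy_div (differentiable_pdt hu p) (differentiable_pdx hu p) hx,
    pdt_div (differentiable_pdy hu p) (differentiable_pdx hu p) hx,
    ← pdt_pdy_eq_pdy_pdt hu]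
  unfold veroneseWebLHS at heq
  obtain rfl : η = -μ - ν := by linarith
  field_simp
  linear_combination -heq

end ConservationLaws

/-- The four first-order conservation laws of the Veronese web equation
`μ u_t u_{xy} + ν u_y u_{xt} + η u_x u_{yt} = 0`, `μ + ν + η = 0`. -/
theorem veronese_web_equation_conservation_laws
    (μ ν η : ℝ) (hμνη : μ + ν + η = 0)
    (u : ℝ × ℝ × ℝ → ℝ) (hu : ContDiff ℝ 2 u)
    (heq : ∀ p : ℝ × ℝ × ℝ,
      μ * pdt u p * pdy (pdx u) p + ν * pdy u p * pdt (pdx u) p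
        + η * pdx u p * pdt (pdy u) p = 0)
    (hx : ∀ p : ℝ × ℝ × ℝ, pdx u p ≠ 0)
    (hy : ∀ p : ℝ × ℝ × ℝ, pdy u p ≠ 0)
    (ht : ∀ p : ℝ × ℝ × ℝ, pdt u p ≠ 0) :
    (∀ p : ℝ × ℝ × ℝ,
      η * pdx (fun q => pdy u q * pdt u q) p + ν * pdy (fun q => pdx u q * pdt u q) p
        + μ * pdt (fun q => pdx u q * pdy u q) p = 0) ∧
    (∀ p : ℝ × ℝ × ℝ,
      ν * pdx (fun q => pdy u q / pdt u q) p + η * pdy (fun q => pdx u q / pdt u q) p = 0) ∧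
    (∀ p : ℝ × ℝ × ℝ,
      μ * pdx (fun q => pdt u q / pdy u q) p + η * pdt (fun q => pdx u q / pdy u q) p = 0) ∧
    (∀ p : ℝ × ℝ × ℝ,
      μ * pdy (fun q => pdt u q / pdx u q) p + ν * pdt (fun q => pdy u q / pdx u q) p = 0) :=
  ⟨fun p => veronese_conservation_mul hμνη hu (heq p),
    fun p => veronese_conservation_div_pdt hμνη hu (ht p) (heq p),
    fun p => veronese_conservation_div_pdy hμνη hu (hy p) (heq p),
    fun p => veronese_conservation_div_pdx hμνη hu (hx p) (heq p)⟩
end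

section
/- Let μ, ν, η be nonzero real numbers with μ + ν + η = 0. For all real p₁, p₂, p₃ with p₁ p₂ p₃ ≠ 0 and all real α, β, γ, δ, set J₁ = α², J₂ = β²/(4νη), J₃ = δ²/(4ημ), J₄ = γ²/(4νμ), J₅ = αβ, J₆ = αδ, J₇ = αγ, J₈ = −βδ/(2η), J₉ = −βγ/(2ν), J₁₀ = −δγ/(2μ), and define F₁ = J₁ η p₂ p₃ + J₂ ν p₂/p₃ + J₃ μ p₃/p₂ − J₅ p₂ + J₆ p₃ + J₈, F₂ = J₁ ν p₁ p₃ + J₂ η p₁/p₃ + J₄ μ p₃/p₁ + J₅ p₁ − J₇ p₃ + J₉, F₃ = J₁ μ p₁ p₂ + J₃ η p₁/p₂ + J₄ ν p₂/p₁ − J₆ p₁ + J₇ p₂ + J₁₀. Let g be the symmetric matrix with g₁₁ = g₂₂ = g₃₃ = 0, g₁₂ = μ p₃, g₁₃ = ν p₂, g₂₃ = η p₁. Then F · adj(g) · Fᵀ = 0, where adj denotes the adjugate matrix. -/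
/-!
Writing `x = η p₁ F₁`, `y = ν p₂ F₂`, `z = μ p₃ F₃`, the quadratic form of the adjugate of `g` is
the Heron form `2(xy + yz + zx) - x² - y² - z²`. With `q = p₁ p₂ p₃`, each of `q x`, `q y`, `q z`
is a perfect square `X²`, `Y²`, `Z²`, and the Heron form of three squares factors as
`(X + Y + Z)(-X + Y + Z)(X - Y + Z)(X + Y - Z)`. The first factor is `α q (μ + ν + η) = 0`.
-/

open Matrix

def heronForm {R : Type*} [CommRing R] (x y z : R) : R :=
  2 * (x * y + y * z + z * x) - x ^ 2 - y ^ 2 - z ^ 2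

theorem heronForm_sq {R : Type*} [CommRing R] (X Y Z : R) :
    heronForm (X ^ 2) (Y ^ 2) (Z ^ 2) =
      (X + Y + Z) * (-X + Y + Z) * (X - Y + Z) * (X + Y - Z) := by
  unfold heronForm
  ring

theorem heronForm_eq_zero_of_mul_eq_sq {K : Type*} [Field K] {q x y z X Y Z : K} (hq : q ≠ 0)
    (hx : q * x = X ^ 2) (hy : q * y = Y ^ 2) (hz : q * z = Z ^ 2) (hXYZ : X + Y + Z = 0) :
    heronForm x y z = 0 := by
  have hscale : q ^ 2 * heronForm x y z = heronForm (q * x) (q * y) (q * z) := by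
    unfold heronForm
    ring
  rw [hx, hy, hz, heronForm_sq, hXYZ] at hscale
  simpa [hq] using hscale

theorem dotProduct_adjugate_mulVec_eq_heronForm {R : Type*} [CommRing R]
    (a b c x y z : R) :
    ![x, y, z] ⬝ᵥ (!![0, a, b; a, 0, c; b, c, 0].adjugate *ᵥ ![x, y, z]) =
      heronForm (c * x) (b * y) (a * z) := by
  simp only [adjugate_fin_three, of_apply, cons_val', cons_val, cons_val_zero, cons_val_one,
    cons_val_fin_one, mulVec, dotProduct, Fin.sum_univ_three]
  unfold heronForm
  ring

def characteristicFlux {K : Type*} [Field K] (e a b c u v : K) : K :=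
  a ^ 2 * e * u * v + b ^ 2 * u / (4 * e * v) + c ^ 2 * v / (4 * e * u)
    + a * b * u + a * c * v + b * c / (2 * e)

theorem mul_characteristicFlux_eq_sq {K : Type*} [Field K] [CharZero K] {e u v : K}
    (he : e ≠ 0) (hu : u ≠ 0) (hv : v ≠ 0) (a b c : K) :
    u * v * (e * characteristicFlux e a b c u v) = (a * e * u * v + b * u / 2 + c * v / 2) ^ 2 := by
  unfold characteristicFlux
  field_simp
  ring

/-- The characteristic integrals of the equation `μ u_t u_{xy} + ν u_y u_{xt} + η u_x u_{yt} = 0`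
(`μ + ν + η = 0`) parametrised by `(α, β, γ, δ)` satisfy the characteristic condition
`F · adj(g) · Fᵀ = 0` for the principal symbol `g`. -/
theorem veronese_web_characteristic_integrals
    (μ ν η : ℝ) (hμ : μ ≠ 0) (hν : ν ≠ 0) (hη : η ≠ 0) (hμνη : μ + ν + η = 0)
    (p₁ p₂ p₃ : ℝ) (hp : p₁ * p₂ * p₃ ≠ 0) (α β γ δ : ℝ)
    (J₁ J₂ J₃ J₄ J₅ J₆ J₇ J₈ J₉ J₁₀ F₁ F₂ F₃ : ℝ)
    (hJ₁ : J₁ = α ^ 2)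
    (hJ₂ : J₂ = β ^ 2 / (4 * ν * η))
    (hJ₃ : J₃ = δ ^ 2 / (4 * η * μ))
    (hJ₄ : J₄ = γ ^ 2 / (4 * ν * μ))
    (hJ₅ : J₅ = α * β)
    (hJ₆ : J₆ = α * δ)
    (hJ₇ : J₇ = α * γ)
    (hJ₈ : J₈ = -(β * δ) / (2 * η))
    (hJ₉ : J₉ = -(β * γ) / (2 * ν))
    (hJ₁₀ : J₁₀ = -(δ * γ) / (2 * μ))
    (hF₁ : F₁ = J₁ * η * p₂ * p₃ + J₂ * ν * p₂ / p₃ + J₃ * μ * p₃ / p₂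
      - J₅ * p₂ + J₆ * p₃ + J₈)
    (hF₂ : F₂ = J₁ * ν * p₁ * p₃ + J₂ * η * p₁ / p₃ + J₄ * μ * p₃ / p₁
      + J₅ * p₁ - J₇ * p₃ + J₉)
    (hF₃ : F₃ = J₁ * μ * p₁ * p₂ + J₃ * η * p₁ / p₂ + J₄ * ν * p₂ / p₁
      - J₆ * p₁ + J₇ * p₂ + J₁₀)
    (g : Matrix (Fin 3) (Fin 3) ℝ)
    (hg : g = !![0, μ * p₃, ν * p₂; μ * p₃, 0, η * p₁; ν * p₂, η * p₁, 0]) :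
    ![F₁, F₂, F₃] ⬝ᵥ (g.adjugate *ᵥ ![F₁, F₂, F₃]) = 0 := by
  obtain ⟨hp₁₂, hp₃⟩ := mul_ne_zero_iff.mp hp
  obtain ⟨hp₁, hp₂⟩ := mul_ne_zero_iff.mp hp₁₂
  subst hJ₁ hJ₂ hJ₃ hJ₄ hJ₅ hJ₆ hJ₇ hJ₈ hJ₉ hJ₁₀
  have hF₁' : F₁ = characteristicFlux η α (-β) δ p₂ p₃ := by
    rw [hF₁, characteristicFlux]; field_simp; ring
  have hF₂' : F₂ = characteristicFlux ν α β (-γ) p₁ p₃ := by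
    rw [hF₂, characteristicFlux]; field_simp; ring
  have hF₃' : F₃ = characteristicFlux μ α (-δ) γ p₁ p₂ := by
    rw [hF₃, characteristicFlux]; field_simp; ring
  rw [hg, dotProduct_adjugate_mulVec_eq_heronForm]
  refine heronForm_eq_zero_of_mul_eq_sq hp
    (X := p₁ * (α * η * p₂ * p₃ - β * p₂ / 2 + δ * p₃ / 2))
    (Y := p₂ * (α * ν * p₁ * p₃ + β * p₁ / 2 - γ * p₃ / 2))
    (Z := p₃ * (α * μ * p₁ * p₂ - δ * p₁ / 2 + γ * p₂ / 2)) ?_ ?_ ?_ ?_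
  · rw [hF₁']
    linear_combination p₁ ^ 2 * mul_characteristicFlux_eq_sq hη hp₂ hp₃ α (-β) δ
  · rw [hF₂']
    linear_combination p₂ ^ 2 * mul_characteristicFlux_eq_sq hν hp₁ hp₃ α β (-γ)
  · rw [hF₃']
    linear_combination p₃ ^ 2 * mul_characteristicFlux_eq_sq hμ hp₁ hp₂ α (-δ) γ
  · linear_combination α * p₁ * p₂ * p₃ * hμνη
end

section
/- For all real p₁, p₂, p₃ with p₁ ≠ 0 and all real α, β, γ, δ, set J₁ = α², J₂ = −δβ, J₃ = β²/2, J₄ = αγ, J₅ = δ²/2, J₆ = βγ, J₇ = αβ, J₈ = −αβ − γδ, J₉ = αδ, J₁₀ = −γ²/2, and define F₁ = J₁ p₂/(2p₁²) + J₂ (p₁ − p₂ p₃) + J₃ (2 p₁ p₃ − p₂ p₃²) − J₄/p₁ − J₅ p₂ + J₆ p₃ + J₈, F₂ = J₁/(2p₁) + J₂ p₁ p₃ + J₃ p₃² p₁ + J₅ p₁ − J₇ p₃ + J₉, F₃ = −J₁ p₂²/(2p₁²) − J₃ p₁² + J₄ p₂/p₁ − J₆ p₁ + J₇ p₂ + J₁₀.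 Let g be the symmetric matrix with g₁₁ = 1, g₂₂ = g₃₃ = g₁₂ = 0, g₁₃ = −p₂/2, g₂₃ = p₁/2. Then F · adj(g) · Fᵀ = 0, where adj denotes the adjugate matrix. -/
/-!
For `g = !![1, 0, a; 0, 0, b; a, b, 0]` the quadratic form of `adj g` is
`-(b F₁ - a F₂)² - 2 b F₂ F₃`; with `a = -p₂/2`, `b = p₁/2` the characteristic condition becomes
`(p₁ F₁ + p₂ F₂)² + 4 p₁ F₂ F₃ = 0`. The flux built from `(α, β, γ, δ)` factors as
`F₂ = X² / (2 p₁)`, `F₃ = -Y² / 2` and `p₁ F₁ + p₂ F₂ = X Y`, with `X = α + p₁ (δ - β p₃)` and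
`Y = α p₂ / p₁ - β p₁ - γ`, so both terms equal `± X² Y²`.
-/

open Matrix

theorem adjugate_fin_three_of_symbol {R : Type*} [CommRing R] (a b : R) :
    (!![1, 0, a; 0, 0, b; a, b, 0] : Matrix (Fin 3) (Fin 3) R).adjugate =
      !![-b ^ 2, a * b, 0; a * b, -a ^ 2, -b; 0, -b, 0] := by
  rw [adjugate_fin_three_of]
  ext i j
  fin_cases i <;> fin_cases j <;> simp <;> ring

theorem dotProduct_adjugate_symbol_mulVec {R : Type*} [CommRing R] (a b F₁ F₂ F₃ : R) :
    ![F₁, F₂, F₃] ⬝ᵥ ((!![1, 0, a; 0, 0, b; a, b, 0] : Matrix (Fin 3) (Fin 3) R).adjugate *ᵥ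
      ![F₁, F₂, F₃]) = -(b * F₁ - a * F₂) ^ 2 - 2 * b * F₂ * F₃ := by
  rw [adjugate_fin_three_of_symbol]
  simp only [vec3_dotProduct, mulVec, of_apply, cons_val]
  ring

/-- The characteristic integrals of the equation `u_{xx} + u_x u_{yt} - u_y u_{xt} = 0`
parametrised by `(α, β, γ, δ)` satisfy the characteristic condition
`F · adj(g) · Fᵀ = 0` for the principal symbol `g`. -/
theorem equation2_characteristic_integrals
    (p₁ p₂ p₃ : ℝ) (hp₁ : p₁ ≠ 0) (α β γ δ : ℝ)
    (J₁ J₂ J₃ J₄ J₅ J₆ J₇ J₈ J₉ J₁₀ F₁ F₂ F₃ : ℝ)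
    (hJ₁ : J₁ = α ^ 2)
    (hJ₂ : J₂ = -(δ * β))
    (hJ₃ : J₃ = β ^ 2 / 2)
    (hJ₄ : J₄ = α * γ)
    (hJ₅ : J₅ = δ ^ 2 / 2)
    (hJ₆ : J₆ = β * γ)
    (hJ₇ : J₇ = α * β)
    (hJ₈ : J₈ = -(α * β) - γ * δ)
    (hJ₉ : J₉ = α * δ)
    (hJ₁₀ : J₁₀ = -(γ ^ 2) / 2)
    (hF₁ : F₁ = J₁ * p₂ / (2 * p₁ ^ 2) + J₂ * (p₁ - p₂ * p₃)
      + J₃ * (2 * p₁ * p₃ - p₂ * p₃ ^ 2) - J₄ / p₁ - J₅ * p₂ + J₆ * p₃ + J₈)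
    (hF₂ : F₂ = J₁ / (2 * p₁) + J₂ * (p₁ * p₃) + J₃ * (p₃ ^ 2 * p₁)
      + J₅ * p₁ - J₇ * p₃ + J₉)
    (hF₃ : F₃ = -(J₁ * p₂ ^ 2 / (2 * p₁ ^ 2)) - J₃ * p₁ ^ 2 + J₄ * p₂ / p₁
      - J₆ * p₁ + J₇ * p₂ + J₁₀)
    (g : Matrix (Fin 3) (Fin 3) ℝ)
    (hg : g = !![1, 0, -p₂ / 2; 0, 0, p₁ / 2; -p₂ / 2, p₁ / 2, 0]) :
    ![F₁, F₂, F₃] ⬝ᵥ (g.adjugate *ᵥ ![F₁, F₂, F₃]) = 0 := by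
  subst hJ₁ hJ₂ hJ₃ hJ₄ hJ₅ hJ₆ hJ₇ hJ₈ hJ₉ hJ₁₀
  have hF₂_sq : F₂ = (α + p₁ * (δ - β * p₃)) ^ 2 / (2 * p₁) := by
    rw [hF₂]; field_simp; ring
  have hF₃_sq : F₃ = -(α * p₂ / p₁ - β * p₁ - γ) ^ 2 / 2 := by
    rw [hF₃]; field_simp; ring
  have hF₁₂ : p₁ * F₁ + p₂ * F₂ = (α + p₁ * (δ - β * p₃)) * (α * p₂ / p₁ - β * p₁ - γ) := by
    rw [hF₁, hF₂]; field_simp; ring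
  calc ![F₁, F₂, F₃] ⬝ᵥ (g.adjugate *ᵥ ![F₁, F₂, F₃])
      = -((p₁ * F₁ + p₂ * F₂) ^ 2 + 4 * p₁ * F₂ * F₃) / 4 := by
        rw [hg, dotProduct_adjugate_symbol_mulVec]; ring
    _ = 0 := by
        rw [hF₁₂, hF₂_sq, hF₃_sq]; field_simp; ring
end

section
/- Let u : ℝ³ → ℝ be twice continuously differentiable in (x,y,t) satisfying u_{xy} + u_y u_{xt} − u_x u_{yt} = 0 at every point, with u_x and u_y nowhere vanishing. Then the following four conservation laws hold at every point: (1) ∂_x(u_y u_t) + ∂_y(u_x − u_x u_t) = 0; (2) ∂_x(u_y u_t²) + ∂_y(2 u_x u_t − u_x u_t² − u_x) − ∂_t(u_x u_y) = 0; (3) ∂_x(1/u_y) − ∂_t(u_x/u_y) = 0; (4) −∂_y(1/u_x) − ∂_t(u_y/u_x) = 0. -/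
theorem ContDiff.differentiable_fderiv_two {E F : Type*} [NormedAddCommGroup E] [NormedSpace ℝ E]
    [NormedAddCommGroup F] [NormedSpace ℝ F] {u : E → F} (hu : ContDiff ℝ 2 u) :
    Differentiable ℝ (fderiv ℝ u) :=
  (hu.fderiv_right (m := 1) (by norm_num)).differentiable one_ne_zero

section DirectionalDerivOp

variable {E : Type*} [NormedAddCommGroup E] [NormedSpace ℝ E]

/-- Models the coordinate partials `pdx`, `pdy`, `pdt`: they are `deriv`s of slices, so they agree
with `fderiv` only where the function is differentiable. -/
def IsDirectionalDerivOp (D : (E → ℝ) → E → ℝ) (e : E) : Prop :=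
  ∀ f x, DifferentiableAt ℝ f x → D f x = fderiv ℝ f x e

namespace IsDirectionalDerivOp

variable {D D₁ D₂ : (E → ℝ) → E → ℝ} {e e₁ e₂ : E} {f g u : E → ℝ} {x : E}

theorem hasDerivAt (hD : IsDirectionalDerivOp D e) (hf : DifferentiableAt ℝ f x) :
    HasDerivAt (fun t : ℝ => f (x + t • e)) (D f x) 0 :=
  hD f x hf ▸ hf.hasFDerivAt.hasLineDerivAt e

theorem apply_const (hD : IsDirectionalDerivOp D e) (k : ℝ) : D (fun _ => k) x = 0 :=
  (hD.hasDerivAt (differentiableAt_const k)).unique (hasDerivAt_const _ k)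

theorem apply_sub (hD : IsDirectionalDerivOp D e) (hf : DifferentiableAt ℝ f x)
    (hg : DifferentiableAt ℝ g x) : D (fun y => f y - g y) x = D f x - D g x :=
  (hD.hasDerivAt (hf.sub hg)).unique ((hD.hasDerivAt hf).sub (hD.hasDerivAt hg))

theorem apply_mul (hD : IsDirectionalDerivOp D e) (hf : DifferentiableAt ℝ f x)
    (hg : DifferentiableAt ℝ g x) : D (fun y => f y * g y) x = D f x * g x + f x * D g x := by
  simpa using (hD.hasDerivAt (hf.fun_mul hg)).unique
    ((hD.hasDerivAt hf).fun_mul (hD.hasDerivAt hg))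

theorem apply_div (hD : IsDirectionalDerivOp D e) (hf : DifferentiableAt ℝ f x)
    (hg : DifferentiableAt ℝ g x) (hgx : g x ≠ 0) :
    D (fun y => f y / g y) x = (D f x * g x - f x * D g x) / g x ^ 2 := by
  have hgx' : g (x + (0 : ℝ) • e) ≠ 0 := by simpa using hgx
  simpa using (hD.hasDerivAt (f := fun y => f y / g y) (by fun_prop (disch := exact hgx))).unique
    ((hD.hasDerivAt hf).div (hD.hasDerivAt hg) hgx')

theorem eq_fderiv_apply (hD : IsDirectionalDerivOp D e) (hu : Differentiable ℝ u) :
    D u = fun x => fderiv ℝ u x e :=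
  funext fun x => hD u x (hu x)

theorem differentiable (hD : IsDirectionalDerivOp D e) (hu : ContDiff ℝ 2 u) :
    Differentiable ℝ (D u) :=
  hD.eq_fderiv_apply (hu.differentiable two_ne_zero) ▸
    hu.differentiable_fderiv_two.clm_apply (differentiable_const e)

theorem comm (h₁ : IsDirectionalDerivOp D₁ e₁) (h₂ : IsDirectionalDerivOp D₂ e₂)
    (hu : ContDiff ℝ 2 u) : D₁ (D₂ u) = D₂ (D₁ u) := by
  funext x
  have hsnd (v w : E) : fderiv ℝ (fun y => fderiv ℝ u y v) x w = fderiv ℝ (fderiv ℝ u) x w v := by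
    simp [fderiv_clm_apply (hu.differentiable_fderiv_two x) (differentiableAt_const v)]
  rw [h₁ _ x (h₂.differentiable hu x), h₂ _ x (h₁.differentiable hu x),
    h₂.eq_fderiv_apply (hu.differentiable two_ne_zero),
    h₁.eq_fderiv_apply (hu.differentiable two_ne_zero), hsnd, hsnd]
  exact hu.contDiffAt.isSymmSndFDerivAt (by simp) e₁ e₂

end IsDirectionalDerivOp

end DirectionalDerivOp

theorem isDirectionalDerivOp_pdx : IsDirectionalDerivOp pdx ((1, 0, 0) : ℝ × ℝ × ℝ) :=
  fun _ p hf => (hf.hasFDerivAt.comp_hasDerivAt p.1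
    ((hasDerivAt_id _).prodMk ((hasDerivAt_const _ _).prodMk (hasDerivAt_const _ _)))).deriv

theorem isDirectionalDerivOp_pdy : IsDirectionalDerivOp pdy ((0, 1, 0) : ℝ × ℝ × ℝ) :=
  fun _ p hf => (hf.hasFDerivAt.comp_hasDerivAt p.2.1
    ((hasDerivAt_const _ _).prodMk ((hasDerivAt_id _).prodMk (hasDerivAt_const _ _)))).deriv

theorem isDirectionalDerivOp_pdt : IsDirectionalDerivOp pdt ((0, 0, 1) : ℝ × ℝ × ℝ) :=
  fun _ p hf => (hf.hasFDerivAt.comp_hasDerivAt p.2.2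
    ((hasDerivAt_const _ _).prodMk ((hasDerivAt_const _ _).prodMk (hasDerivAt_id _)))).deriv

section ConservationLaws

variable {E : Type*} [NormedAddCommGroup E] [NormedSpace ℝ E]
  {Dx Dy Dt : (E → ℝ) → E → ℝ} {ex ey et : E} {a b c : E → ℝ} {p : E}

theorem conservation_law_one (hx : IsDirectionalDerivOp Dx ex) (hy : IsDirectionalDerivOp Dy ey)
    (ha : DifferentiableAt ℝ a p) (hb : DifferentiableAt ℝ b p) (hc : DifferentiableAt ℝ c p)
    (hba : Dx b p = Dy a p) (hca : Dx c p = Dt a p) (hcb : Dy c p = Dt b p)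
    (heq : Dy a p + b p * Dt a p - a p * Dt b p = 0) :
    Dx (fun q => b q * c q) p + Dy (fun q => a q - a q * c q) p = 0 := by
  rw [hx.apply_mul hb hc, hy.apply_sub ha (ha.fun_mul hc), hy.apply_mul ha hc, hba, hca, hcb]
  linear_combination heq

theorem conservation_law_two (hx : IsDirectionalDerivOp Dx ex) (hy : IsDirectionalDerivOp Dy ey)
    (ht : IsDirectionalDerivOp Dt et)
    (ha : DifferentiableAt ℝ a p) (hb : DifferentiableAt ℝ b p) (hc : DifferentiableAt ℝ c p)
    (hba : Dx b p = Dy a p) (hca : Dx c p = Dt a p) (hcb : Dy c p = Dt b p)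
    (heq : Dy a p + b p * Dt a p - a p * Dt b p = 0) :
    Dx (fun q => b q * c q ^ 2) p
      + Dy (fun q => 2 * a q * c q - a q * c q ^ 2 - a q) p
      - Dt (fun q => a q * b q) p = 0 := by
  simp (disch := fun_prop) only [sq, hx.apply_mul, hy.apply_sub, hy.apply_mul, ht.apply_mul,
    hy.apply_const]
  rw [hba, hca, hcb]
  linear_combination (2 * c p - 1) * heq

theorem conservation_law_three (hx : IsDirectionalDerivOp Dx ex) (ht : IsDirectionalDerivOp Dt et)
    (ha : DifferentiableAt ℝ a p) (hb : DifferentiableAt ℝ b p) (hb0 : b p ≠ 0)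
    (hba : Dx b p = Dy a p) (heq : Dy a p + b p * Dt a p - a p * Dt b p = 0) :
    Dx (fun q => 1 / b q) p - Dt (fun q => a q / b q) p = 0 := by
  rw [hx.apply_div (differentiableAt_const 1) hb hb0, ht.apply_div ha hb hb0, hx.apply_const, hba,
    div_sub_div_same, div_eq_zero_iff]
  left
  linear_combination -heq

theorem conservation_law_four (hy : IsDirectionalDerivOp Dy ey) (ht : IsDirectionalDerivOp Dt et)
    (ha : DifferentiableAt ℝ a p) (hb : DifferentiableAt ℝ b p) (ha0 : a p ≠ 0)
    (heq : Dy a p + b p * Dt a p - a p * Dt b p = 0) :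
    -Dy (fun q => 1 / a q) p - Dt (fun q => b q / a q) p = 0 := by
  rw [hy.apply_div (differentiableAt_const 1) ha ha0, ht.apply_div hb ha ha0, hy.apply_const,
    ← neg_div, div_sub_div_same, div_eq_zero_iff]
  left
  linear_combination heq

end ConservationLaws

/-- The four first-order conservation laws of the equation
`u_{xy} + u_y u_{xt} - u_x u_{yt} = 0`. -/
theorem equation3_conservation_laws
    (u : ℝ × ℝ × ℝ → ℝ) (hu : ContDiff ℝ 2 u)
    (heq : ∀ p : ℝ × ℝ × ℝ,
      pdy (pdx u) p + pdy u p * pdt (pdx u) p - pdx u p * pdt (pdy u) p = 0)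
    (hx : ∀ p : ℝ × ℝ × ℝ, pdx u p ≠ 0)
    (hy : ∀ p : ℝ × ℝ × ℝ, pdy u p ≠ 0) :
    (∀ p : ℝ × ℝ × ℝ,
      pdx (fun q => pdy u q * pdt u q) p
        + pdy (fun q => pdx u q - pdx u q * pdt u q) p = 0) ∧
    (∀ p : ℝ × ℝ × ℝ,
      pdx (fun q => pdy u q * (pdt u q) ^ 2) p
        + pdy (fun q => 2 * pdx u q * pdt u q - pdx u q * (pdt u q) ^ 2 - pdx u q) p
        - pdt (fun q => pdx u q * pdy u q) p = 0) ∧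
    (∀ p : ℝ × ℝ × ℝ,
      pdx (fun q => 1 / pdy u q) p - pdt (fun q => pdx u q / pdy u q) p = 0) ∧
    (∀ p : ℝ × ℝ × ℝ,
      -pdy (fun q => 1 / pdx u q) p - pdt (fun q => pdy u q / pdx u q) p = 0) := by
  have hX := isDirectionalDerivOp_pdx
  have hY := isDirectionalDerivOp_pdy
  have hT := isDirectionalDerivOp_pdt
  have ha := hX.differentiable hu
  have hb := hY.differentiable hu
  have hc := hT.differentiable hu
  have hba := congrFun (hX.comm hY hu)
  have hca := congrFun (hX.comm hT hu)
  have hcb := congrFun (hY.comm hT hu)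
  refine ⟨fun p => ?_, fun p => ?_, fun p => ?_, fun p => ?_⟩
  · exact conservation_law_one hX hY (ha p) (hb p) (hc p) (hba p) (hca p) (hcb p) (heq p)
  · exact conservation_law_two hX hY hT (ha p) (hb p) (hc p) (hba p) (hca p) (hcb p) (heq p)
  · exact conservation_law_three hX hT (ha p) (hb p) (hy p) (hba p) (heq p)
  · exact conservation_law_four hY hT (ha p) (hb p) (hx p) (heq p)
end

section
/- For all real p₁, p₂, p₃ with p₁ ≠ 0 and p₂ ≠ 0 and all real α, β, γ, δ, set J₁ = αβ, J₂ = α², J₃ = δ²/4, J₄ = γ²/4, J₅ = −β²/4, J₆ = −αδ, J₇ = αγ, J₈ = −βδ/2, J₉ = αγ − βγ/2, J₁₀ = −δγ/2, and define F₁ = J₁ p₂ p₃ + J₂ p₂ p₃² + J₃/p₂ − J₅ p₂ + J₆ p₃ + J₈, F₂ = J₁ (p₁ − p₁ p₃) + J₂ (2 p₁ p₃ − p₁ p₃² − p₁) − J₄/p₁ + J₅ p₁ − J₇ p₃ + J₉, F₃ = −J₂ p₁ p₂ − J₃ p₁/p₂ − J₄ p₂/p₁ − J₆ p₁ + J₇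 p₂ + J₁₀. Let g be the symmetric matrix with g₁₁ = g₂₂ = g₃₃ = 0, g₁₂ = 1/2, g₁₃ = p₂/2, g₂₃ = −p₁/2. Then F · adj(g) · Fᵀ = 0, where adj denotes the adjugate matrix. -/
/-!
The adjugate of the symbol is `-(1/4)` times the Gram matrix of the quadratic form
`Q(F) = (p₁F₁ + p₂F₂)² + 2F₃(p₁F₁ - p₂F₂) + F₃²`, whose null cone is parametrised by
`F = (A²/p₂, -B²/p₁, -(p₁A + p₂B)²/(p₁p₂))`: with `a = p₁A`, `b = p₂B` one gets
`(p₁p₂)² Q(F) = (a + b)² ((a - b)² - 2(a² + b²) + (a + b)²) = 0`.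
Each component of the given flux is a perfect square of this shape, with
`A = p₂(αp₃ + β/2) - δ/2` and `B = p₁(α(1 - p₃) - β/2) - γ/2`.
-/

open Matrix

variable {K : Type*} [Field K] [CharZero K]

/-- The principal symbol of `u_{xy} + u_y u_{xt} - u_x u_{yt} = 0` at `(u_x, u_y) = (p₁, p₂)`. -/
def principalSymbol (p₁ p₂ : K) : Matrix (Fin 3) (Fin 3) K :=
  !![0, 1 / 2, p₂ / 2; 1 / 2, 0, -p₁ / 2; p₂ / 2, -p₁ / 2, 0]

theorem adjugate_principalSymbol (p₁ p₂ : K) :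
    (principalSymbol p₁ p₂).adjugate =
      (-(1 / 4) : K) • !![p₁ ^ 2, p₁ * p₂, p₁; p₁ * p₂, p₂ ^ 2, -p₂; p₁, -p₂, 1] := by
  rw [principalSymbol, adjugate_fin_three]
  ext i j
  fin_cases i <;> fin_cases j <;>
    simp only [of_apply, cons_val', cons_val_zero, cons_val_one, cons_val, cons_val_fin_one,
      Fin.zero_eta, Fin.mk_one, Fin.reduceFinMk, Matrix.smul_apply, smul_eq_mul] <;>
    ring

theorem dotProduct_adjugate_principalSymbol_mulVec (p₁ p₂ : K) (v : Fin 3 → K) :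
    v ⬝ᵥ ((principalSymbol p₁ p₂).adjugate *ᵥ v) =
      -((p₁ * v 0 + p₂ * v 1) ^ 2 + 2 * v 2 * (p₁ * v 0 - p₂ * v 1) + v 2 ^ 2) / 4 := by
  rw [adjugate_principalSymbol, smul_mulVec, dotProduct_smul]
  simp only [dotProduct, mulVec, of_apply, cons_val', cons_val_fin_one, Fin.sum_univ_three,
    cons_val_zero, cons_val_one, cons_val, smul_eq_mul]
  ring

theorem dotProduct_adjugate_principalSymbol_mulVec_squares_eq_zero {p₁ p₂ : K} (hp₁ : p₁ ≠ 0) (hp₂ : p₂ ≠ 0)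
    (A B : K) :
    let F : Fin 3 → K := ![A ^ 2 / p₂, -(B ^ 2 / p₁), -((p₁ * A + p₂ * B) ^ 2 / (p₁ * p₂))]
    F ⬝ᵥ ((principalSymbol p₁ p₂).adjugate *ᵥ F) = 0 := by
  intro F
  rw [dotProduct_adjugate_principalSymbol_mulVec]
  simp only [F, cons_val_zero, cons_val_one, cons_val]
  field_simp
  ring

/-- The characteristic integrals of the equation `u_{xy} + u_y u_{xt} - u_x u_{yt} = 0`
parametrised by `(α, β, γ, δ)` satisfy the characteristic condition
`F · adj(g) · Fᵀ = 0` for the principal symbol `g`. -/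
theorem equation3_characteristic_integrals
    (p₁ p₂ p₃ : ℝ) (hp₁ : p₁ ≠ 0) (hp₂ : p₂ ≠ 0) (α β γ δ : ℝ)
    (J₁ J₂ J₃ J₄ J₅ J₆ J₇ J₈ J₉ J₁₀ F₁ F₂ F₃ : ℝ)
    (hJ₁ : J₁ = α * β)
    (hJ₂ : J₂ = α ^ 2)
    (hJ₃ : J₃ = δ ^ 2 / 4)
    (hJ₄ : J₄ = γ ^ 2 / 4)
    (hJ₅ : J₅ = -(β ^ 2) / 4)
    (hJ₆ : J₆ = -(α * δ))
    (hJ₇ : J₇ = α * γ)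
    (hJ₈ : J₈ = -(β * δ) / 2)
    (hJ₉ : J₉ = α * γ - β * γ / 2)
    (hJ₁₀ : J₁₀ = -(δ * γ) / 2)
    (hF₁ : F₁ = J₁ * (p₂ * p₃) + J₂ * (p₂ * p₃ ^ 2) + J₃ / p₂
      - J₅ * p₂ + J₆ * p₃ + J₈)
    (hF₂ : F₂ = J₁ * (p₁ - p₁ * p₃) + J₂ * (2 * p₁ * p₃ - p₁ * p₃ ^ 2 - p₁)
      - J₄ / p₁ + J₅ * p₁ - J₇ * p₃ + J₉)
    (hF₃ : F₃ = -(J₂ * p₁ * p₂) - J₃ * p₁ / p₂ - J₄ * p₂ / p₁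
      - J₆ * p₁ + J₇ * p₂ + J₁₀)
    (g : Matrix (Fin 3) (Fin 3) ℝ)
    (hg : g = !![0, 1 / 2, p₂ / 2; 1 / 2, 0, -p₁ / 2; p₂ / 2, -p₁ / 2, 0]) :
    ![F₁, F₂, F₃] ⬝ᵥ (g.adjugate *ᵥ ![F₁, F₂, F₃]) = 0 := by
  subst hJ₁ hJ₂ hJ₃ hJ₄ hJ₅ hJ₆ hJ₇ hJ₈ hJ₉ hJ₁₀
  set A := p₂ * (α * p₃ + β / 2) - δ / 2
  set B := p₁ * (α * (1 - p₃) - β / 2) - γ / 2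
  have hA : F₁ = A ^ 2 / p₂ := by rw [hF₁]; field_simp; ring
  have hB : F₂ = -(B ^ 2 / p₁) := by rw [hF₂]; field_simp; ring
  have hAB : F₃ = -((p₁ * A + p₂ * B) ^ 2 / (p₁ * p₂)) := by rw [hF₃]; field_simp; ring
  rw [hg, hA, hB, hAB]
  exact dotProduct_adjugate_principalSymbol_mulVec_squares_eq_zero hp₁ hp₂ A B
end
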